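/- The greedy solution value is a lower bound for the maxmin objective but may be strictly suboptimal: there exist nonnegative coefficient families A_i(t) such that Σ-free coupling via min_j makes the componentwise-greedy phases fail to maximize min_j Σ_{i,k} u[i,j,k]·A_i(t_i)[j,k]. Concretely, for M = 2 observers, N = 2 targets, L = 1 timestep, there exist functions A_1, A_2 : {0,1} → Fin 2 → ℝ with nonnegative values such that the pair of phases each maximizing its own cumulative information does not maximize the minimum over targets of total information. -/

import Mathlib

/-!
Greedy phase selection only sees each observer's best single target, so it can pick phases in
which both observers favour the same target. Take phase `0` to give an observer `2` on target `0`
and nothing on target `1`, and phase `1` to give `1` on both targets. Greedy picks phase `0` for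
both observers, leaving target `1` with no information (maxmin value `0`), whereas phases `(1, 1)`
let the two observers cover one target each (maxmin value `1`).
-/

/-- Cumulative information of observer `i ∈ Fin 2` at phase `t ∈ Fin 2`:
the best single-target value `max_j A i t j` (M = 2 observers, N = 2 targets,
L = 1 timestep, phases in the two-point set `Fin 2`). -/
noncomputable def cumInfo (A : Fin 2 → Fin 2 → Fin 2 → ℝ) (i t : Fin 2) : ℝ :=
  Finset.univ.sup' Finset.univ_nonempty (fun j : Fin 2 => A i t j)

/-- Maxmin value at phases `(t₁, t₂)`: maximum over target selections
`(j₁, j₂)` of the minimum over targets `j` of the total information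
`∑_{i : jᵢ = j} A i tᵢ j` received by target `j`. -/
noncomputable def maxminVal (A : Fin 2 → Fin 2 → Fin 2 → ℝ) (t₁ t₂ : Fin 2) : ℝ :=
  Finset.univ.sup' Finset.univ_nonempty (fun p : Fin 2 × Fin 2 =>
    Finset.univ.inf' Finset.univ_nonempty (fun j : Fin 2 =>
      (if p.1 = j then A 0 t₁ j else 0) + (if p.2 = j then A 1 t₂ j else 0)))

section

variable (A : Fin 2 → Fin 2 → Fin 2 → ℝ)

theorem cumInfo_eq_max (i t : Fin 2) : cumInfo A i t = max (A i t 0) (A i t 1) := by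
  refine le_antisymm (Finset.sup'_le _ _ fun j _ => ?_)
    (max_le (Finset.le_sup' _ (Finset.mem_univ 0)) (Finset.le_sup' _ (Finset.mem_univ 1)))
  fin_cases j <;> simp

theorem maxminVal_le_add (hA : ∀ i t j, 0 ≤ A i t j) (t₁ t₂ j : Fin 2) :
    maxminVal A t₁ t₂ ≤ A 0 t₁ j + A 1 t₂ j := by
  refine Finset.sup'_le _ _ fun p _ => (Finset.inf'_le _ (Finset.mem_univ j)).trans ?_
  gcongr
  · split_ifs <;> simp [hA]
  · split_ifs <;> simp [hA]

/-- The selection sending observer `0` to target `0` and observer `1` to target `1`. -/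
theorem min_le_maxminVal (t₁ t₂ : Fin 2) :
    min (A 0 t₁ 0) (A 1 t₂ 1) ≤ maxminVal A t₁ t₂ := by
  refine le_trans ?_ (Finset.le_sup' _ (Finset.mem_univ ((0, 1) : Fin 2 × Fin 2)))
  refine Finset.le_inf' _ _ fun j _ => ?_
  fin_cases j <;> simp

end

def greedyTrap : Fin 2 → Fin 2 → Fin 2 → ℝ :=
  fun _ t j => if t = 0 then (if j = 0 then 2 else 0) else 1

theorem greedyTrap_nonneg (i t j : Fin 2) : 0 ≤ greedyTrap i t j := by
  unfold greedyTrap; split_ifs <;> norm_num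

theorem cumInfo_greedyTrap_le_phase_zero (i t : Fin 2) :
    cumInfo greedyTrap i t ≤ cumInfo greedyTrap i 0 := by
  fin_cases t <;> norm_num [cumInfo_eq_max, greedyTrap]

theorem maxminVal_greedyTrap_zero_zero_nonpos : maxminVal greedyTrap 0 0 ≤ 0 := by
  simpa [greedyTrap] using maxminVal_le_add greedyTrap greedyTrap_nonneg 0 0 1

theorem one_le_maxminVal_greedyTrap_one_one : 1 ≤ maxminVal greedyTrap 1 1 := by
  simpa [greedyTrap] using min_le_maxminVal greedyTrap 1 1

/-- There exist nonnegative coefficient families `A i t j` (observer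
`i`, phase `t`, target `j`) such that some pair of phases, each maximizing its
own observer's cumulative information (greedy), fails to maximize the maxmin
objective: some other pair of phases achieves a strictly larger minimum-over-
targets total information. -/
theorem stmt_5 :
    ∃ A : Fin 2 → Fin 2 → Fin 2 → ℝ,
      (∀ i t j, 0 ≤ A i t j) ∧
      ∃ tg : Fin 2 → Fin 2,
        (∀ i t, cumInfo A i t ≤ cumInfo A i (tg i)) ∧
        ∃ t₁ t₂ : Fin 2, maxminVal A (tg 0) (tg 1) < maxminVal A t₁ t₂ :=
  ⟨greedyTrap, greedyTrap_nonneg, fun _ => 0, cumInfo_greedyTrap_le_phase_zero, 1, 1,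
    maxminVal_greedyTrap_zero_zero_nonpos.trans_lt
      (zero_lt_one.trans_le one_le_maxminVal_greedyTrap_one_one)⟩
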